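/- arXiv:2003.03426 — 9 statements merged into one kernel-verified Lean document; each statement's English description precedes it below -/
import Mathlib

section
/- Let d ≥ 1 and T ≥ 1 be integers, and let a : ℕ → ℝ satisfy the blocking constraint. Then ∑_{t=1}^{T} min(t, d) · a(t) ≤ T; in particular d · ∑_{t=1}^{T} a(t) ≤ T + ∑_{t=1}^{d−1} (d − t) · a(t) ≤ T + d − 1. -/
open Finset

/-- Double counting: `min t d` is the number of windows `[s, s + d - 1]` with `1 ≤ s ≤ T`
that contain `t`. -/
lemma sum_min_mul_eq_sum_sum_window (d T : ℕ) (a : ℕ → ℝ) :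
    ∑ t ∈ Icc 1 T, ((min t d : ℕ) : ℝ) * a t
      = ∑ s ∈ Icc 1 T, ∑ t ∈ Icc s (min T (s + d - 1)), a t := by
  have hcount : ∀ t ∈ Icc 1 T,
      ((min t d : ℕ) : ℝ) * a t = ∑ _s ∈ Icc (max 1 (t + 1 - d)) t, a t := by
    intro t ht
    rw [sum_const, Nat.card_Icc, nsmul_eq_mul]
    have := mem_Icc.mp ht
    congr 2
    omega
  rw [sum_congr rfl hcount]
  refine sum_comm' fun t s => ?_
  simp only [mem_Icc]
  omega

lemma sum_min_mul_le_of_window_le (d T : ℕ) (a : ℕ → ℝ) (c : ℝ)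
    (ha : ∀ t, 1 ≤ t → 0 ≤ a t)
    (hwindow : ∀ t, 1 ≤ t → ∑ t' ∈ Icc t (t + d - 1), a t' ≤ c) :
    ∑ t ∈ Icc 1 T, ((min t d : ℕ) : ℝ) * a t ≤ T * c := by
  rw [sum_min_mul_eq_sum_sum_window]
  calc ∑ s ∈ Icc 1 T, ∑ t ∈ Icc s (min T (s + d - 1)), a t
      ≤ ∑ s ∈ Icc 1 T, ∑ t ∈ Icc s (s + d - 1), a t := by
        refine sum_le_sum fun s hs => sum_le_sum_of_subset_of_nonneg
          (Icc_subset_Icc le_rfl (min_le_right _ _)) fun t ht _ => ?_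
        exact ha t ((mem_Icc.mp hs).1.trans (mem_Icc.mp ht).1)
    _ ≤ ∑ _s ∈ Icc 1 T, c := sum_le_sum fun s hs => hwindow s (mem_Icc.mp hs).1
    _ = T * c := by simp

lemma mul_sum_le_sum_min_mul_add (d T : ℕ) (a : ℕ → ℝ) (ha : ∀ t, 1 ≤ t → 0 ≤ a t) :
    (d : ℝ) * ∑ t ∈ Icc 1 T, a t
      ≤ ∑ t ∈ Icc 1 T, ((min t d : ℕ) : ℝ) * a t
        + ∑ t ∈ Icc 1 (d - 1), ((d : ℝ) - t) * a t := by
  have hsplit : (d : ℝ) * ∑ t ∈ Icc 1 T, a t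
      = ∑ t ∈ Icc 1 T, ((min t d : ℕ) : ℝ) * a t
        + ∑ t ∈ Icc 1 T, ((d : ℝ) - (min t d : ℕ)) * a t := by
    rw [mul_sum, ← sum_add_distrib]
    exact sum_congr rfl fun t _ => by ring
  have hhead : ∑ t ∈ Icc 1 T, ((d : ℝ) - (min t d : ℕ)) * a t
      = ∑ t ∈ Icc 1 (min T (d - 1)), ((d : ℝ) - t) * a t := by
    symm
    refine sum_subset_zero_on_sdiff (Icc_subset_Icc le_rfl (min_le_left _ _)) ?_ ?_
    · intro t ht
      simp only [mem_sdiff, mem_Icc] at ht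
      rw [min_eq_right (by omega), sub_self, zero_mul]
    · intro t ht
      rw [min_eq_left (by simp only [mem_Icc] at ht; omega)]
  have hextend : ∑ t ∈ Icc 1 (min T (d - 1)), ((d : ℝ) - t) * a t
      ≤ ∑ t ∈ Icc 1 (d - 1), ((d : ℝ) - t) * a t := by
    refine sum_le_sum_of_subset_of_nonneg (Icc_subset_Icc le_rfl (min_le_right _ _))
      fun t ht _ => ?_
    have ht' := mem_Icc.mp ht
    have htd : (t : ℝ) ≤ d := by exact_mod_cast (by omega : t ≤ d)
    exact mul_nonneg (sub_nonneg.mpr htd) (ha t ht'.1)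
  linarith

lemma sum_sub_mul_le_of_window_le (d : ℕ) (hd : 1 ≤ d) (a : ℕ → ℝ) (c : ℝ)
    (ha : ∀ t, 1 ≤ t → 0 ≤ a t)
    (hwindow : ∑ t ∈ Icc 1 d, a t ≤ c) :
    ∑ t ∈ Icc 1 (d - 1), ((d : ℝ) - t) * a t ≤ ((d : ℝ) - 1) * c := by
  have hd' : (1 : ℝ) ≤ d := by exact_mod_cast hd
  calc ∑ t ∈ Icc 1 (d - 1), ((d : ℝ) - t) * a t
      ≤ ∑ t ∈ Icc 1 (d - 1), ((d : ℝ) - 1) * a t := by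
        refine sum_le_sum fun t ht => mul_le_mul_of_nonneg_right ?_ (ha t (mem_Icc.mp ht).1)
        have : (1 : ℝ) ≤ t := by exact_mod_cast (mem_Icc.mp ht).1
        linarith
    _ ≤ ((d : ℝ) - 1) * ∑ t ∈ Icc 1 d, a t := by
        rw [← mul_sum]
        refine mul_le_mul_of_nonneg_left (sum_le_sum_of_subset_of_nonneg
          (Icc_subset_Icc le_rfl (Nat.sub_le d 1)) fun t ht _ => ha t (mem_Icc.mp ht).1) ?_
        linarith
    _ ≤ ((d : ℝ) - 1) * c := mul_le_mul_of_nonneg_left hwindow (by linarith)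

theorem blocking_weighted_plays_bound_general (d T : ℕ) (hd : 1 ≤ d)
    (a : ℕ → ℝ)
    (hval : ∀ t, 1 ≤ t → a t = 0 ∨ a t = 1)
    (hblock : ∀ t, 1 ≤ t → ∑ t' ∈ Finset.Icc t (t + d - 1), a t' ≤ 1) :
    (∑ t ∈ Finset.Icc 1 T, ((min t d : ℕ) : ℝ) * a t ≤ (T : ℝ)) ∧
    ((d : ℝ) * ∑ t ∈ Finset.Icc 1 T, a t
        ≤ (T : ℝ) + ∑ t ∈ Finset.Icc 1 (d - 1), ((d : ℝ) - (t : ℝ)) * a t) ∧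
    ((T : ℝ) + ∑ t ∈ Finset.Icc 1 (d - 1), ((d : ℝ) - (t : ℝ)) * a t
        ≤ (T : ℝ) + (d : ℝ) - 1) := by
  have ha : ∀ t, 1 ≤ t → 0 ≤ a t := fun t ht => by rcases hval t ht with h | h <;> simp [h]
  have hmin := sum_min_mul_le_of_window_le d T a 1 ha hblock
  have hhead := sum_sub_mul_le_of_window_le d hd a 1 ha (by simpa using hblock 1 le_rfl)
  rw [mul_one] at hmin hhead
  exact ⟨hmin, by linarith [mul_sum_le_sum_min_mul_add d T a ha], by linarith⟩

/-- For an arm with blocking delay `d`, plays `a t ∈ {0,1}` satisfying the blocking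
constraint obey `∑_{t=1}^{T} min(t,d)·a(t) ≤ T`; in particular
`d·∑_{t=1}^{T} a(t) ≤ T + ∑_{t=1}^{d-1} (d-t)·a(t) ≤ T + d - 1`. -/
theorem blocking_weighted_plays_bound (d T : ℕ) (hd : 1 ≤ d) (hT : 1 ≤ T)
    (a : ℕ → ℝ)
    (hval : ∀ t, 1 ≤ t → a t = 0 ∨ a t = 1)
    (hblock : ∀ t, 1 ≤ t → ∑ t' ∈ Finset.Icc t (t + d - 1), a t' ≤ 1) :
    (∑ t ∈ Finset.Icc 1 T, ((min t d : ℕ) : ℝ) * a t ≤ (T : ℝ)) ∧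
    ((d : ℝ) * ∑ t ∈ Finset.Icc 1 T, a t
        ≤ (T : ℝ) + ∑ t ∈ Finset.Icc 1 (d - 1), ((d : ℝ) - (t : ℝ)) * a t) ∧
    ((T : ℝ) + ∑ t ∈ Finset.Icc 1 (d - 1), ((d : ℝ) - (t : ℝ)) * a t
        ≤ (T : ℝ) + (d : ℝ) - 1) :=
  blocking_weighted_plays_bound_general d T hd a hval hblock
end

section
/- For every integer t ≥ 1 it holds that q(t) ≥ d/(2d−1); consequently β(t) · q(t) = d/(2d−1) (equivalently, min(q(t), α) = α) for every t ≥ 1. -/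
/-!
Every availability `q t` equals the closed form `1 - (min t d - 1) α z`: once `q s ≥ α`, the
skipping rule makes `β s * q s = α`, so the recursion subtracts exactly `α z` per round and,
from round `d` on, adds back the same `α z`. The closed form is smallest for `t ≥ d`, where it is
`1 - (d - 1) α z ≥ 1 - (d - 1) α / d = α` because `α (2d - 1) = d`.
-/

lemma min_one_div_mul_of_le {α x : ℝ} (hα : 0 < α) (hx : α ≤ x) : min 1 (α / x) * x = α := by
  have hx0 : 0 < x := hα.trans_le hx
  rw [min_eq_right ((div_le_one hx0).mpr hx), div_mul_cancel₀ _ hx0.ne']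

namespace FICBB

def availability (d : ℕ) (α z : ℝ) (t : ℕ) : ℝ :=
  1 - (((min t d : ℕ) : ℝ) - 1) * (α * z)

lemma availability_one {d : ℕ} (hd : 1 ≤ d) (α z : ℝ) : availability d α z 1 = 1 := by
  simp [availability, Nat.min_eq_left hd]

lemma availability_succ (d : ℕ) (α z : ℝ) (t : ℕ) :
    availability d α z (t + 1) =
      availability d α z t - α * z + if d ≤ t then α * z else 0 := by
  unfold availability
  split_ifs with hdt
  · rw [Nat.min_eq_right hdt, Nat.min_eq_right (by omega)]
    ring
  · rw [Nat.min_eq_left (by omega), Nat.min_eq_left (by omega)]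
    push_cast
    ring

lemma le_availability {d : ℕ} (hd : 1 ≤ d) {z : ℝ} (hz0 : 0 ≤ z) (hz1 : z ≤ 1 / (d : ℝ))
    {t : ℕ} (ht : 1 ≤ t) :
    (d : ℝ) / (2 * d - 1) ≤ availability d ((d : ℝ) / (2 * d - 1)) z t := by
  set α : ℝ := (d : ℝ) / (2 * d - 1)
  have hd1 : (1 : ℝ) ≤ d := by exact_mod_cast hd
  have hα0 : 0 ≤ α := div_nonneg (by linarith) (by linarith)
  have hmin1 : (1 : ℝ) ≤ ((min t d : ℕ) : ℝ) := by exact_mod_cast le_min ht hd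
  have hmind : ((min t d : ℕ) : ℝ) ≤ d := by exact_mod_cast min_le_right t d
  have hfloor : 1 - ((d : ℝ) - 1) * (α * (1 / d)) = α := by
    have h2d : (2 * d - 1 : ℝ) ≠ 0 := by linarith
    have hd0 : (d : ℝ) ≠ 0 := by linarith
    rw [mul_one_div, div_div_cancel_left' hd0, eq_div_iff h2d, sub_mul, inv_mul_cancel_right₀ h2d]
    ring
  calc α = 1 - ((d : ℝ) - 1) * (α * (1 / d)) := hfloor.symm
    _ ≤ 1 - (((min t d : ℕ) : ℝ) - 1) * (α * z) := by
      gcongr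

lemma eq_availability {d : ℕ} (hd : 1 ≤ d) {α z : ℝ} {q β : ℕ → ℝ} (hq1 : q 1 = 1)
    (hβ : ∀ t, 1 ≤ t → α ≤ q t → β t * q t = α)
    (hfloor : ∀ t, 1 ≤ t → α ≤ availability d α z t)
    (hrec : ∀ t, 1 ≤ t → q (t + 1) =
      q t * (1 - β t * z) + (if d ≤ t then q (t - d + 1) * β (t - d + 1) * z else 0)) :
    ∀ t, 1 ≤ t → q t = availability d α z t := by
  intro t
  induction t using Nat.strong_induction_on with
  | _ t ih =>
    intro ht
    obtain rfl | ⟨s, hs, rfl⟩ : t = 1 ∨ ∃ s, 1 ≤ s ∧ t = s + 1 :=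
      (eq_or_lt_of_le ht).imp Eq.symm fun h => ⟨t - 1, by omega, by omega⟩
    · rw [hq1, availability_one hd]
    have hqs := ih s (by omega) hs
    have hβqs : β s * q s = α := hβ s hs (hqs ▸ hfloor s hs)
    rw [hrec s hs, availability_succ, ← hqs]
    split_ifs with hds
    · have hqr := ih (s - d + 1) (by omega) (by omega)
      have hβqr : β (s - d + 1) * q (s - d + 1) = α :=
        hβ _ (by omega) (hqr ▸ hfloor _ (by omega))
      linear_combination (-z) * hβqs + z * hβqr
    · linear_combination (-z) * hβqs

end FICBB

/-- For the FI-CBB ex-ante availability probabilities `q` and non-skipping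
probabilities `β` of an arm with blocking delay `d` and LP sampling mass `z ≤ 1/d`,
one has `q t ≥ d/(2d-1)` for every `t ≥ 1`, and consequently
`β t * q t = d/(2d-1)` for every `t ≥ 1`. -/
theorem ficbb_availability_lower_bound (d : ℕ) (hd : 1 ≤ d) (z : ℝ)
    (hz0 : 0 ≤ z) (hz1 : z ≤ 1 / (d : ℝ))
    (q β : ℕ → ℝ)
    (hq1 : q 1 = 1)
    (hβ : ∀ t, 1 ≤ t → β t = min 1 (((d : ℝ) / (2 * (d : ℝ) - 1)) / q t))
    (hrec : ∀ t, 1 ≤ t → q (t + 1) =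
      q t * (1 - β t * z) +
        (if d ≤ t then q (t - d + 1) * β (t - d + 1) * z else 0)) :
    ∀ t, 1 ≤ t →
      (d : ℝ) / (2 * (d : ℝ) - 1) ≤ q t ∧
      β t * q t = (d : ℝ) / (2 * (d : ℝ) - 1) := by
  have hα : 0 < (d : ℝ) / (2 * d - 1) := by
    have hd1 : (1 : ℝ) ≤ d := by exact_mod_cast hd
    exact div_pos (by linarith) (by linarith)
  have hβq : ∀ t, 1 ≤ t → (d : ℝ) / (2 * d - 1) ≤ q t → β t * q t = d / (2 * d - 1) :=
    fun t ht hqt => (hβ t ht).symm ▸ min_one_div_mul_of_le hα hqt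
  have hfloor := fun t (ht : 1 ≤ t) => FICBB.le_availability hd hz0 hz1 ht
  have hq := FICBB.eq_availability hd hq1 hβq hfloor hrec
  intro t ht
  have hqt : (d : ℝ) / (2 * d - 1) ≤ q t := hq t ht ▸ hfloor t ht
  exact ⟨hqt, hβq t ht hqt⟩
end

section
/- For every integer t ≥ 1 the availability probability satisfies the unrolled identity q(t) = 1 − z · ∑_{τ = max(1, t−d+1)}^{t−1} β(τ) · q(τ) (the sum being empty when t = 1). -/
open Finset

lemma sum_Icc_eq_sum_Icc_pred_add {M : Type*} [AddCommMonoid M] (f : ℕ → M) {a t : ℕ}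
    (hat : a ≤ t) (ht : 1 ≤ t) :
    ∑ τ ∈ Icc a t, f τ = ∑ τ ∈ Icc a (t - 1), f τ + f t := by
  obtain ⟨n, rfl⟩ : ∃ n, t = n + 1 := ⟨t - 1, by omega⟩
  rw [sum_Icc_succ_top hat, Nat.add_sub_cancel]

/-- For `t < d` truncated subtraction pins both left ends at `1`, so nothing leaves the window. -/
lemma sum_Icc_window_succ {M : Type*} [AddCommGroup M] (f : ℕ → M) {d t : ℕ}
    (hd : 1 ≤ d) (ht : 1 ≤ t) :
    ∑ τ ∈ Icc (t + 1 - d + 1) t, f τ =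
      ∑ τ ∈ Icc (t - d + 1) (t - 1), f τ + f t - if d ≤ t then f (t - d + 1) else 0 := by
  rw [← sum_Icc_eq_sum_Icc_pred_add f (by omega) ht]
  split_ifs with hdt
  · rw [show t + 1 - d + 1 = t - d + 1 + 1 by omega, Icc_add_one_left_eq_Ioc,
      Icc_eq_cons_Ioc (by omega), sum_cons, add_sub_cancel_left]
  · rw [show t + 1 - d + 1 = t - d + 1 by omega, sub_zero]

theorem ficbb_availability_unrolled_general (d : ℕ) (hd : 1 ≤ d) (z : ℝ)
    (q β : ℕ → ℝ)
    (hq1 : q 1 = 1)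
    (hrec : ∀ t, 1 ≤ t → q (t + 1) =
      q t * (1 - β t * z) +
        (if d ≤ t then q (t - d + 1) * β (t - d + 1) * z else 0)) :
    ∀ t, 1 ≤ t →
      q t = 1 - z * ∑ τ ∈ Finset.Icc (t - d + 1) (t - 1), β τ * q τ := by
  intro t ht
  induction t, ht using Nat.le_induction with
  | base => simp [hq1]
  | succ n hn ih =>
    rw [hrec n hn, Nat.add_sub_cancel, sum_Icc_window_succ _ hd hn]
    split_ifs <;> linear_combination ih

/-- For the FI-CBB ex-ante availability probabilities `q` and non-skipping
probabilities `β` of an arm with blocking delay `d` and LP sampling mass `z ≤ 1/d`,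
the unrolled identity
`q t = 1 - z * ∑_{τ = max(1, t-d+1)}^{t-1} β τ * q τ` holds for every `t ≥ 1`.
(In ℕ, truncated subtraction makes `t - d + 1` equal to `max(1, t-d+1)`.) -/
theorem ficbb_availability_unrolled (d : ℕ) (hd : 1 ≤ d) (z : ℝ)
    (hz0 : 0 ≤ z) (hz1 : z ≤ 1 / (d : ℝ))
    (q β : ℕ → ℝ)
    (hq1 : q 1 = 1)
    (hβ : ∀ t, 1 ≤ t → β t = min 1 (((d : ℝ) / (2 * (d : ℝ) - 1)) / q t))
    (hrec : ∀ t, 1 ≤ t → q (t + 1) =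
      q t * (1 - β t * z) +
        (if d ≤ t then q (t - d + 1) * β (t - d + 1) * z else 0)) :
    ∀ t, 1 ≤ t →
      q t = 1 - z * ∑ τ ∈ Finset.Icc (t - d + 1) (t - 1), β τ * q τ :=
  ficbb_availability_unrolled_general d hd z q β hq1 hrec
end

section
/- Every extreme point z of the polytope P has at most k + m nonzero coordinates, i.e. the set {(i,j) : z_{i,j} ≠ 0} has cardinality at most k + m. -/
/-!
If the support `S` of `z` had more than `k + m` entries, the linear conditions "all row sums
vanish, all column sums vanish, all entries outside `S` vanish" (`k + m + (k m - |S|)` of them)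
could not cut the `k m`-dimensional matrix space down to zero. A nonzero solution `w` is a
direction along which `z ± t w` stays in the polytope for small `t`: the row and column sums do
not change, and the entries that could turn negative are those of `S`, where `z` is positive.
So `z` is the midpoint of two distinct points of the polytope.
-/

open Filter Finset Topology

variable {ι κ E : Type*}

def sumsAndEntriesOff [Fintype ι] [Fintype κ] (S : Finset (ι × κ)) :
    (ι → κ → ℝ) →ₗ[ℝ] (ι → ℝ) × (κ → ℝ) × ({p : ι × κ // p ∉ S} → ℝ) where
  toFun w := (fun i => ∑ j, w i j, fun j => ∑ i, w i j, fun p => w p.1.1 p.1.2)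
  map_add' a b := by
    refine Prod.ext ?_ (Prod.ext ?_ ?_) <;> funext <;> simp [sum_add_distrib]
  map_smul' c a := by
    refine Prod.ext ?_ (Prod.ext ?_ ?_) <;> funext <;> simp [mul_sum]

lemma exists_ne_zero_sums_eq_zero_of_card_lt [Fintype ι] [Fintype κ]
    (S : Finset (ι × κ)) (hS : Fintype.card ι + Fintype.card κ < #S) :
    ∃ w : ι → κ → ℝ, w ≠ 0 ∧ (∀ i, ∑ j, w i j = 0) ∧ (∀ j, ∑ i, w i j = 0) ∧
      ∀ i j, (i, j) ∉ S → w i j = 0 := by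
  classical
  have hS_le : #S ≤ Fintype.card ι * Fintype.card κ := by
    simpa using S.card_le_univ
  have hcompl :
      Fintype.card {p : ι × κ // p ∉ S} = Fintype.card ι * Fintype.card κ - #S := by
    simp
  have hker : LinearMap.ker (sumsAndEntriesOff S) ≠ ⊥ := by
    apply LinearMap.ker_ne_bot_of_finrank_lt
    simp only [Module.finrank_prod, Module.finrank_fintype_fun_eq_card, hcompl,
      Module.finrank_pi_fintype, sum_const, card_univ, smul_eq_mul]
    omega
  obtain ⟨w, hw, hw0⟩ := (Submodule.ne_bot_iff _).1 hker
  simp only [LinearMap.mem_ker, sumsAndEntriesOff, LinearMap.coe_mk, AddHom.coe_mk,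
    Prod.mk_eq_zero, funext_iff] at hw
  exact ⟨w, hw0, hw.1, hw.2.1, fun i j h => hw.2.2 ⟨(i, j), h⟩⟩

lemma eventually_nonneg_add_mul {a b : ℝ} (ha : 0 ≤ a) (hb : a = 0 → b = 0) :
    ∀ᶠ t in 𝓝 (0 : ℝ), 0 ≤ a + t * b := by
  rcases ha.eq_or_lt with rfl | ha
  · simp [hb rfl]
  · have : Tendsto (fun t => a + t * b) (𝓝 0) (𝓝 a) :=
      (continuous_const.add (continuous_id.mul continuous_const)).tendsto' 0 a (by simp)
    exact (this.eventually (lt_mem_nhds ha)).mono fun _ => le_of_lt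

lemma eq_zero_of_add_mem_of_sub_mem_of_mem_extremePoints [AddCommGroup E]
    [Module ℝ E] {A : Set E} {x v : E} (hx : x ∈ A.extremePoints ℝ) (hadd : x + v ∈ A)
    (hsub : x - v ∈ A) : v = 0 := by
  simpa using hx.2 hadd hsub (mem_openSegment_add_sub x v)

lemma eq_zero_of_eventually_add_smul_mem_of_mem_extremePoints [AddCommGroup E]
    [Module ℝ E] {A : Set E} {x v : E} (hx : x ∈ A.extremePoints ℝ)
    (hv : ∀ᶠ t in 𝓝 (0 : ℝ), x + t • v ∈ A) : v = 0 := by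
  have hv_neg : ∀ᶠ t in 𝓝 (0 : ℝ), x + (-t) • v ∈ A :=
    (continuous_neg.tendsto' 0 0 neg_zero).eventually hv
  obtain ⟨t, ⟨hpos, hneg⟩, ht⟩ :=
    ((hv.and hv_neg).filter_mono nhdsWithin_le_nhds).and self_mem_nhdsWithin |>.exists
      (f := 𝓝[≠] (0 : ℝ))
  rw [neg_smul, ← sub_eq_add_neg] at hneg
  have htv : t • v = 0 := eq_zero_of_add_mem_of_sub_mem_of_mem_extremePoints hx hpos hneg
  exact (smul_eq_zero.1 htv).resolve_left ht

theorem lp_extreme_point_sparse_general (k m : ℕ)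
    (d : Fin k → ℝ)
    (f : Fin m → ℝ)
    (z : Fin k → Fin m → ℝ)
    (hz : z ∈ Set.extremePoints ℝ
      {w : Fin k → Fin m → ℝ |
        (∀ i j, 0 ≤ w i j) ∧
        (∀ i, ∑ j, w i j ≤ 1 / d i) ∧
        (∀ j, ∑ i, w i j ≤ f j)}) :
    (Finset.univ.filter (fun p : Fin k × Fin m => z p.1 p.2 ≠ 0)).card ≤ k + m := by
  by_contra! hcard
  obtain ⟨w, hw0, hrow, hcol, hsupp⟩ :=
    exists_ne_zero_sums_eq_zero_of_card_lt {p : Fin k × Fin m | z p.1 p.2 ≠ 0}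
      (by simpa using hcard)
  obtain ⟨hz0, hzrow, hzcol⟩ := hz.1
  refine hw0 (eq_zero_of_eventually_add_smul_mem_of_mem_extremePoints hz ?_)
  have hnonneg : ∀ᶠ t in 𝓝 (0 : ℝ), ∀ i j, 0 ≤ z i j + t * w i j :=
    eventually_all.2 fun i => eventually_all.2 fun j =>
      eventually_nonneg_add_mul (hz0 i j) fun h => hsupp i j (by simpa using h)
  filter_upwards [hnonneg] with t ht
  refine ⟨ht, fun i => ?_, fun j => ?_⟩
  · simpa [sum_add_distrib, ← mul_sum, hrow] using hzrow i
  · simpa [sum_add_distrib, ← mul_sum, hcol] using hzcol j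

/-- Every extreme point of the contextual-blocking-bandits LP polytope
`P = {z : z ≥ 0, ∑_j z_{i,j} ≤ 1/d_i ∀i, ∑_i z_{i,j} ≤ f_j ∀j}` has at most
`k + m` nonzero coordinates. -/
theorem lp_extreme_point_sparse (k m : ℕ) (hk : 0 < k) (hm : 0 < m)
    (d : Fin k → ℝ) (hd : ∀ i, 1 ≤ d i)
    (f : Fin m → ℝ) (hf : ∀ j, 0 ≤ f j)
    (z : Fin k → Fin m → ℝ)
    (hz : z ∈ Set.extremePoints ℝ
      {w : Fin k → Fin m → ℝ |
        (∀ i j, 0 ≤ w i j) ∧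
        (∀ i, ∑ j, w i j ≤ 1 / d i) ∧
        (∀ j, ∑ i, w i j ≤ f j)}) :
    (Finset.univ.filter (fun p : Fin k × Fin m => z p.1 p.2 ≠ 0)).card ≤ k + m :=
  lp_extreme_point_sparse_general k m d f z hz
end

section
/- If R > ε + 1/(d−1), then for all q₁, q₂ ∈ [0,1] one has f(q₁, q₂) ≤ R/(1 + (d−1)·ε), and this maximum is attained at (q₁, q₂) = (1, 0), i.e. f(1, 0) = R/(1 + (d−1)·ε). -/
/-- The time-average expected reward of the stationary online policy in the
hardness instance (arm of delay `d`, contexts with probabilities `ε` and `1-ε`,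
rewards `R/ε` and `1`). -/
noncomputable def hardnessF (d : ℕ) (ε R q₁ q₂ : ℝ) : ℝ :=
  (R * q₁ + (1 - ε) * q₂) / (1 + ((d : ℝ) - 1) * (ε * q₁ + (1 - ε) * q₂))

/-- If `R > ε + 1/(d-1)`, then `f(q₁,q₂) ≤ R/(1 + (d-1)ε)` on `[0,1]²`, with the
maximum attained at `(q₁,q₂) = (1,0)`. -/
theorem hardnessF_max_at_one_zero (d : ℕ) (hd : 2 ≤ d) (ε R : ℝ)
    (hε0 : 0 < ε) (hε1 : ε < 1) (hR : 0 < R)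
    (hRbig : R > ε + 1 / ((d : ℝ) - 1)) :
    (∀ q₁ q₂ : ℝ, q₁ ∈ Set.Icc (0 : ℝ) 1 → q₂ ∈ Set.Icc (0 : ℝ) 1 →
        hardnessF d ε R q₁ q₂ ≤ R / (1 + ((d : ℝ) - 1) * ε)) ∧
    hardnessF d ε R 1 0 = R / (1 + ((d : ℝ) - 1) * ε) := by
  have hd1 : (1 : ℝ) ≤ (d : ℝ) - 1 := by
    have : (2 : ℝ) ≤ (d : ℝ) := by exact_mod_cast hd
    linarith
  have hdpos : (0 : ℝ) < (d : ℝ) - 1 := by linarith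
  have hkey : ((d : ℝ) - 1) * (R - ε) > 1 := by
    have h : 1 / ((d : ℝ) - 1) < R - ε := by linarith
    have := (div_lt_iff₀ hdpos).mp h
    nlinarith
  constructor
  · intro q₁ q₂ hq₁ hq₂
    obtain ⟨h10, h11⟩ := hq₁
    obtain ⟨h20, h21⟩ := hq₂
    have hden : 0 < 1 + ((d : ℝ) - 1) * (ε * q₁ + (1 - ε) * q₂) := by
      nlinarith [mul_nonneg hε0.le h10, mul_nonneg (by linarith : (0:ℝ) ≤ 1 - ε) h20]
    have hden2 : 0 < 1 + ((d : ℝ) - 1) * ε := by nlinarith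
    rw [hardnessF, div_le_div_iff₀ hden hden2]
    nlinarith [mul_nonneg (mul_nonneg (by linarith : (0:ℝ) ≤ 1 - ε) h20)
      (by linarith : (0:ℝ) ≤ ((d : ℝ) - 1) * (R - ε) - 1), hR.le, h10, h11]
  · rw [hardnessF]
    ring_nf
end

section
/- If ε < R < ε + 1/(d−1), then for all q₁, q₂ ∈ [0,1] one has f(q₁, q₂) ≤ (R + 1 − ε)/d, and this maximum is attained at (q₁, q₂) = (1, 1), i.e. f(1, 1) = (R + 1 − ε)/d. -/
/-- If `ε < R < ε + 1/(d-1)`, then `f(q₁,q₂) ≤ (R + 1 - ε)/d` on `[0,1]²`, with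
the maximum attained at `(q₁,q₂) = (1,1)`. -/
theorem hardnessF_max_at_one_one (d : ℕ) (hd : 2 ≤ d) (ε R : ℝ)
    (hε0 : 0 < ε) (hε1 : ε < 1) (hR : 0 < R)
    (hRlow : ε < R) (hRhigh : R < ε + 1 / ((d : ℝ) - 1)) :
    (∀ q₁ q₂ : ℝ, q₁ ∈ Set.Icc (0 : ℝ) 1 → q₂ ∈ Set.Icc (0 : ℝ) 1 →
        hardnessF d ε R q₁ q₂ ≤ (R + 1 - ε) / (d : ℝ)) ∧
    hardnessF d ε R 1 1 = (R + 1 - ε) / (d : ℝ) := by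
  have hd1 : (1:ℝ) ≤ (d:ℝ) - 1 := by
    have : (2:ℝ) ≤ (d:ℝ) := by exact_mod_cast hd
    linarith
  have hD : (0:ℝ) < (d:ℝ) - 1 := by linarith
  have hdpos : (0:ℝ) < (d:ℝ) := by linarith
  have hRD : ((d:ℝ) - 1) * (R - ε) ≤ 1 := by
    have h : R - ε < 1 / ((d:ℝ) - 1) := by linarith
    have := (lt_div_iff₀ hD).mp h
    nlinarith
  -- corner values of the (affine) cross-multiplied gap
  have h00 : (0:ℝ) ≤ R + 1 - ε := by linarith
  have h10 : (0:ℝ) ≤ (1 - ε) * (1 - ((d:ℝ) - 1) * (R - ε)) := by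
    apply mul_nonneg <;> nlinarith
  have h01 : (0:ℝ) ≤ R * (1 + ((d:ℝ) - 1) * (1 - ε)) - ((d:ℝ) - 1) * ε * (1 - ε) := by
    nlinarith
  constructor
  · intro q₁ q₂ h1 h2
    obtain ⟨h10', h11'⟩ := h1
    obtain ⟨h20', h21'⟩ := h2
    have hden : 0 < 1 + ((d:ℝ) - 1) * (ε * q₁ + (1 - ε) * q₂) := by
      have ha := mul_nonneg hε0.le h10'
      have hb := mul_nonneg (by linarith : (0:ℝ) ≤ 1 - ε) h20'
      nlinarith
    rw [hardnessF, div_le_div_iff₀ hden hdpos]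
    have e1 : 0 ≤ (1 - q₁) * (1 - q₂) := mul_nonneg (by linarith) (by linarith)
    have e2 : 0 ≤ q₁ * (1 - q₂) := mul_nonneg h10' (by linarith)
    have e3 : 0 ≤ (1 - q₁) * q₂ := mul_nonneg (by linarith) h20'
    nlinarith [mul_nonneg e1 h00, mul_nonneg e2 h10, mul_nonneg e3 h01]
  · rw [hardnessF]
    have : 1 + ((d:ℝ) - 1) * (ε * 1 + (1 - ε) * 1) = (d:ℝ) := by ring
    rw [this]
    ring
end

section
/- Fix an integer d ≥ 2. For ε ∈ (0,1) set R(ε) = 2ε + 1/(d−1) and B(ε) = d·⌈1/√ε⌉, and define g(ε) = [ R(ε)/(1 + (d−1)·ε) ] / [ R(ε)·(1 − d/B(ε))·(1−ε)^{B(ε)−1} + (1/d − 1/B(ε))·(1−ε)^{B(ε)} ]. Then g(ε) tends to d/(2d−1) as ε tends to 0 from the right. -/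
open Filter

/-- The block length `B(ε) = d·⌈1/√ε⌉` used by the clairvoyant block policy. -/
noncomputable def hardnessB (d : ℕ) (ε : ℝ) : ℕ := d * ⌈1 / Real.sqrt ε⌉₊

/-!
Since `B(ε) ≥ d/√ε` and `B(ε)·ε ≤ d(√ε + ε)`, both `d/B(ε)` and `B(ε)·ε` tend to `0`. Bernoulli's
inequality `1 - nε ≤ (1 - ε)^n ≤ 1` then sends both powers `(1 - ε)^(B-1)` and `(1 - ε)^B` to `1`, so
the numerator tends to `c = 1/(d-1)` and the denominator to `c + 1/d`, and `c/(c + 1/d) = d/(2d-1)`.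
-/

open Topology Real

theorem tendsto_one_sub_pow_of_tendsto_mul {α : Type*} {l : Filter α} {ε : α → ℝ} {n : α → ℕ}
    (hε : ∀ᶠ x in l, ε x ∈ Set.Icc 0 1) (hn : Tendsto (fun x => n x * ε x) l (𝓝 0)) :
    Tendsto (fun x => (1 - ε x) ^ n x) l (𝓝 1) := by
  have hlower : Tendsto (fun x => 1 - n x * ε x) l (𝓝 1) := by
    simpa using hn.const_sub 1
  refine tendsto_of_tendsto_of_tendsto_of_le_of_le' hlower tendsto_const_nhds ?_ ?_
  · filter_upwards [hε] with x ⟨_, hx1⟩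
    simpa [sub_eq_add_neg] using one_add_mul_le_pow (a := -ε x) (by linarith) (n x)
  · filter_upwards [hε] with x ⟨hx0, hx1⟩
    exact pow_le_one₀ (by linarith) (by linarith)

section hardnessB

variable (d : ℕ) {ε : ℝ}

theorem div_hardnessB_le_sqrt (hε : 0 < ε) : (d : ℝ) / hardnessB d ε ≤ √ε := by
  have hs : 0 < √ε := sqrt_pos.mpr hε
  rcases Nat.eq_zero_or_pos d with rfl | hd
  · simp [hs.le]
  have hceil : 1 / √ε ≤ ⌈1 / √ε⌉₊ := Nat.le_ceil _
  have hB : (0 : ℝ) < hardnessB d ε := by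
    unfold hardnessB; push_cast
    exact mul_pos (by exact_mod_cast hd) ((by positivity : (0:ℝ) < 1 / √ε).trans_le hceil)
  rw [div_le_iff₀ hB, hardnessB]; push_cast
  calc (d : ℝ) = √ε * (d * (1 / √ε)) := by field_simp
    _ ≤ √ε * (d * ⌈1 / √ε⌉₊) := by gcongr

theorem hardnessB_mul_le (hε : 0 < ε) : (hardnessB d ε : ℝ) * ε ≤ d * (√ε + ε) := by
  have hceil : (⌈1 / √ε⌉₊ : ℝ) < 1 / √ε + 1 := Nat.ceil_lt_add_one (by positivity)
  rw [hardnessB]; push_cast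
  calc (d : ℝ) * ⌈1 / √ε⌉₊ * ε ≤ d * (1 / √ε + 1) * ε := by gcongr
    _ = d * (ε / √ε + ε) := by ring
    _ = d * (√ε + ε) := by rw [div_sqrt]

theorem tendsto_const_div_hardnessB (c : ℝ) :
    Tendsto (fun ε => c / hardnessB d ε) (𝓝[>] 0) (𝓝 0) := by
  have hsqrt : Tendsto (fun ε : ℝ => √ε) (𝓝[>] 0) (𝓝 0) := by
    simpa using (continuous_sqrt.tendsto 0).mono_left nhdsWithin_le_nhds
  have hdiv : Tendsto (fun ε => (d : ℝ) / hardnessB d ε) (𝓝[>] 0) (𝓝 0) := by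
    refine tendsto_of_tendsto_of_tendsto_of_le_of_le' tendsto_const_nhds hsqrt ?_ ?_
    · exact Eventually.of_forall fun ε => by positivity
    · filter_upwards [self_mem_nhdsWithin] with ε hε using div_hardnessB_le_sqrt d hε
  rcases eq_or_ne (d : ℝ) 0 with hd | hd
  · simp [hardnessB, (by exact_mod_cast hd : d = 0)]
  · simpa [div_mul_div_cancel₀ hd] using hdiv.const_mul (c / d)

theorem tendsto_one_sub_pow_hardnessB_sub (k : ℕ) :
    Tendsto (fun ε => (1 - ε) ^ (hardnessB d ε - k)) (𝓝[>] 0) (𝓝 1) := by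
  have hunit : ∀ᶠ ε in 𝓝[>] (0 : ℝ), ε ∈ Set.Ioo 0 1 := Ioo_mem_nhdsGT one_pos
  have hbound : Tendsto (fun ε : ℝ => (d : ℝ) * (√ε + ε)) (𝓝[>] 0) (𝓝 0) := by
    have : Continuous fun ε : ℝ => (d : ℝ) * (√ε + ε) := by fun_prop
    simpa using (this.tendsto 0).mono_left nhdsWithin_le_nhds
  refine tendsto_one_sub_pow_of_tendsto_mul
    (hunit.mono fun ε hε => Set.Ioo_subset_Icc_self hε) ?_
  refine tendsto_of_tendsto_of_tendsto_of_le_of_le' tendsto_const_nhds hbound ?_ ?_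
  · filter_upwards [hunit] with ε hε using mul_nonneg (Nat.cast_nonneg _) hε.1.le
  · filter_upwards [hunit] with ε hε
    calc ((hardnessB d ε - k : ℕ) : ℝ) * ε ≤ hardnessB d ε * ε := by
          gcongr; exact hε.1.le; exact Nat.sub_le _ _
      _ ≤ d * (√ε + ε) := hardnessB_mul_le d hε.1

end hardnessB

/-- With `R(ε) = 2ε + 1/(d-1)` and `B(ε) = d·⌈1/√ε⌉`, the ratio
`g(ε) = [R(ε)/(1+(d-1)ε)] / [R(ε)(1 - d/B(ε))(1-ε)^{B(ε)-1} + (1/d - 1/B(ε))(1-ε)^{B(ε)}]`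
tends to `d/(2d-1)` as `ε → 0⁺`. -/
theorem hardness_ratio_tendsto (d : ℕ) (hd : 2 ≤ d) :
    Tendsto (fun ε : ℝ =>
        ((2 * ε + 1 / ((d : ℝ) - 1)) / (1 + ((d : ℝ) - 1) * ε)) /
          ((2 * ε + 1 / ((d : ℝ) - 1)) * (1 - (d : ℝ) / ((hardnessB d ε : ℕ) : ℝ)) *
              (1 - ε) ^ (hardnessB d ε - 1) +
            (1 / (d : ℝ) - 1 / ((hardnessB d ε : ℕ) : ℝ)) * (1 - ε) ^ (hardnessB d ε)))
      (nhdsWithin (0 : ℝ) (Set.Ioi 0))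
      (nhds ((d : ℝ) / (2 * (d : ℝ) - 1))) := by
  have hd1 : (1 : ℝ) < d := by exact_mod_cast hd
  set c : ℝ := 1 / ((d : ℝ) - 1) with hc
  have hc0 : 0 < c := one_div_pos.mpr (sub_pos.mpr hd1)
  have hid : Tendsto (fun ε : ℝ => ε) (𝓝[>] 0) (𝓝 0) := nhdsWithin_le_nhds
  have hR : Tendsto (fun ε : ℝ => 2 * ε + c) (𝓝[>] 0) (𝓝 c) := by
    simpa using (hid.const_mul 2).add_const c
  have hnum : Tendsto (fun ε : ℝ => (2 * ε + c) / (1 + ((d : ℝ) - 1) * ε)) (𝓝[>] 0) (𝓝 c) := by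
    have h := hR.div ((hid.const_mul ((d : ℝ) - 1)).const_add 1) (by simp)
    simp only [mul_zero, add_zero, div_one] at h
    exact h
  have hden := ((hR.mul ((tendsto_const_div_hardnessB d d).const_sub 1)).mul
      (tendsto_one_sub_pow_hardnessB_sub d 1)).add
    (((tendsto_const_div_hardnessB d 1).const_sub (1 / (d : ℝ))).mul
      (tendsto_one_sub_pow_hardnessB_sub d 0))
  simp only [sub_zero, mul_one, Nat.sub_zero] at hden
  have hlim : (d : ℝ) / (2 * d - 1) = c / (c + 1 / d) := by
    have : (d : ℝ) - 1 ≠ 0 := by linarith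
    have : 2 * (d : ℝ) - 1 ≠ 0 := by linarith
    rw [hc]
    field_simp
    ring
  rw [hlim]
  exact hnum.div hden (by positivity)
end

section
/- For every integer d ≥ 1 and every real x with 0 ≤ x ≤ 1/d, one has 1 − (1 − (d/(2d−1))·x)^{d+1} ≥ (d·(d+1)/(2·(2d−1)))·x. -/
/-! The substitution `y = d x / (2d - 1)` turns the claim into `(d + 1) y / 2 ≤ 1 - (1 - y)^(d + 1)`.
The second Bonferroni bound `(1 - y)^n ≤ 1 - n y + C(n, 2) y²` reduces this to `d y ≤ 1`,
which holds because `d y ≤ (2d - 1) y = d x ≤ 1`. -/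

section Bonferroni

variable {R : Type*} [CommRing R] [LinearOrder R] [IsStrictOrderedRing R] {y : R}

theorem one_sub_pow_le_one_sub_mul_add_choose_two_mul_sq (hy0 : 0 ≤ y) (hy1 : y ≤ 1) (n : ℕ) :
    (1 - y) ^ n ≤ 1 - n * y + n.choose 2 * y ^ 2 := by
  induction n with
  | zero => simp
  | succ n ih =>
    have hc : (0 : R) ≤ n.choose 2 := Nat.cast_nonneg _
    calc (1 - y) ^ (n + 1) = (1 - y) ^ n * (1 - y) := pow_succ _ _
      _ ≤ (1 - n * y + n.choose 2 * y ^ 2) * (1 - y) :=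
          mul_le_mul_of_nonneg_right ih (sub_nonneg.mpr hy1)
      _ = 1 - (n + 1) * y + (n + n.choose 2) * y ^ 2 - n.choose 2 * y ^ 3 := by ring
      _ ≤ 1 - (n + 1) * y + (n + n.choose 2) * y ^ 2 := by
          have : 0 ≤ (n.choose 2 : R) * y ^ 3 := mul_nonneg hc (pow_nonneg hy0 3)
          linarith
      _ = 1 - ((n + 1 : ℕ) : R) * y + ((n + 1).choose 2 : ℕ) * y ^ 2 := by
          rw [Nat.choose_succ_succ', Nat.choose_one_right]
          push_cast
          ring

end Bonferroni

theorem half_mul_le_one_sub_one_sub_pow {m : ℕ} {y : ℝ} (hy0 : 0 ≤ y) (hy1 : y ≤ 1)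
    (hmy : m * y ≤ 1) : (m + 1) / 2 * y ≤ 1 - (1 - y) ^ (m + 1) := by
  have h := one_sub_pow_le_one_sub_mul_add_choose_two_mul_sq hy0 hy1 (m + 1)
  rw [Nat.cast_choose_two] at h
  push_cast at h
  nlinarith [mul_nonneg hy0 (sub_nonneg.mpr hmy)]

/-- For every integer `d ≥ 1` and real `0 ≤ x ≤ 1/d`,
`1 - (1 - (d/(2d-1))·x)^(d+1) ≥ (d(d+1)/(2(2d-1)))·x`. -/
theorem subsampling_trigger_lower_bound (d : ℕ) (hd : 1 ≤ d) (x : ℝ)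
    (hx0 : 0 ≤ x) (hx1 : x ≤ 1 / (d : ℝ)) :
    1 - (1 - ((d : ℝ) / (2 * (d : ℝ) - 1)) * x) ^ (d + 1) ≥
      ((d : ℝ) * ((d : ℝ) + 1) / (2 * (2 * (d : ℝ) - 1))) * x := by
  have hd1 : (1 : ℝ) ≤ d := by exact_mod_cast hd
  have hden : (0 : ℝ) < 2 * d - 1 := by linarith
  set y : ℝ := d / (2 * d - 1) * x with hy
  have hy0 : 0 ≤ y := by positivity
  have hdx : (d : ℝ) * x ≤ 1 := (le_div_iff₀' (by positivity)).mp hx1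
  have hyd : (2 * d - 1) * y = d * x := by rw [hy]; field_simp
  have hdy : (d : ℝ) * y ≤ 1 := by nlinarith
  have hrhs : (d : ℝ) * (d + 1) / (2 * (2 * d - 1)) * x = (d + 1) / 2 * y := by
    rw [hy]; field_simp
  rw [ge_iff_le, hrhs]
  exact half_mul_le_one_sub_one_sub_pow hy0 (by nlinarith) hdy
end

section
/- Let c₁ = e²/(e²−1), let D ≥ 1 be an integer, and define M(t) = ⌊2·log_{c₁}(t)⌋ + 2D + 8 for integers t ≥ 1. Then there exists a smallest positive integer T_c with T_c − M(T_c) ≥ 1, and it satisfies 2D + 67 ≤ T_c ≤ 3D + 71. -/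
open Real

private lemma e2_bounds : (7.389056 : ℝ) < Real.exp 1 ^ 2 ∧ Real.exp 1 ^ 2 < 7.389057 := by
  have h1 : (2.7182818283 : ℝ) < Real.exp 1 := Real.exp_one_gt_d9
  have h2 : Real.exp 1 < 2.7182818286 := Real.exp_one_lt_d9
  constructor <;> nlinarith

private lemma c_gt_one : (1 : ℝ) < Real.exp 1 ^ 2 / (Real.exp 1 ^ 2 - 1) := by
  obtain ⟨h1, h2⟩ := e2_bounds
  rw [lt_div_iff₀ (by nlinarith)]
  nlinarith

private lemma c_lower : (1.156 : ℝ) ≤ Real.exp 1 ^ 2 / (Real.exp 1 ^ 2 - 1) := by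
  obtain ⟨h1, h2⟩ := e2_bounds
  rw [le_div_iff₀ (by nlinarith)]
  nlinarith

private lemma c_upper : Real.exp 1 ^ 2 / (Real.exp 1 ^ 2 - 1) ≤ (1.1565177 : ℝ) := by
  obtain ⟨h1, h2⟩ := e2_bounds
  rw [div_le_iff₀ (by nlinarith)]
  nlinarith

/-- The key numeric fact: `c^29 ≤ 68`. -/
private lemma c_pow29 : (Real.exp 1 ^ 2 / (Real.exp 1 ^ 2 - 1)) ^ 29 ≤ (68 : ℝ) := by
  calc (Real.exp 1 ^ 2 / (Real.exp 1 ^ 2 - 1)) ^ 29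
      ≤ (1.1565177 : ℝ) ^ 29 :=
        pow_le_pow_left₀ (by nlinarith [c_gt_one]) c_upper 29
    _ ≤ 68 := by norm_num

/-- Exponential growth for the upper bound: `(3n+74)² < c^(n+64)`. -/
private lemma pow_growth (n : ℕ) :
    ((3 * n + 74 : ℕ) : ℝ) ^ 2 < (Real.exp 1 ^ 2 / (Real.exp 1 ^ 2 - 1)) ^ (n + 64) := by
  set c : ℝ := Real.exp 1 ^ 2 / (Real.exp 1 ^ 2 - 1) with hc
  have hcl : (1.156 : ℝ) ≤ c := c_lower
  induction n with
  | zero =>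
      have h1 : (1.156 : ℝ) ^ 64 ≤ c ^ 64 := pow_le_pow_left₀ (by norm_num) hcl 64
      have h2 : (5476 : ℝ) < (1.156 : ℝ) ^ 64 := by norm_num
      push_cast
      nlinarith
  | succ k ih =>
      have hk : (0 : ℝ) ≤ (k : ℝ) := Nat.cast_nonneg k
      have hstep : c ^ (k + 1 + 64) = c * c ^ (k + 64) := by ring
      have hpos : ((3 * k + 74 : ℕ) : ℝ) ^ 2 ≥ 0 := sq_nonneg _
      push_cast at ih ⊢
      rw [hstep]
      nlinarith [ih, sq_nonneg ((k : ℝ) + 1)]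

/-- Let `c₁ = e²/(e²-1)`, `D ≥ 1`, and `M(t) = ⌊2·log_{c₁}(t)⌋ + 2D + 8`.  There is a
smallest positive integer `T_c` with `T_c - M(T_c) ≥ 1`, and it satisfies
`2D + 67 ≤ T_c ≤ 3D + 71`. -/
theorem critical_time_bounds (D : ℕ) (hD : 1 ≤ D) :
    ∃ Tc : ℕ,
      IsLeast {t : ℕ | 0 < t ∧
        1 ≤ (t : ℤ) -
          (⌊2 * Real.logb (Real.exp 1 ^ 2 / (Real.exp 1 ^ 2 - 1)) (t : ℝ)⌋
            + 2 * (D : ℤ) + 8)} Tc ∧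
      2 * D + 67 ≤ Tc ∧ Tc ≤ 3 * D + 71 := by
  set c : ℝ := Real.exp 1 ^ 2 / (Real.exp 1 ^ 2 - 1) with hc
  have hc1 : (1 : ℝ) < c := c_gt_one
  have hlogc : (0 : ℝ) < Real.log c := Real.log_pos hc1
  set S : Set ℕ := {t : ℕ | 0 < t ∧
    1 ≤ (t : ℤ) - (⌊2 * Real.logb c (t : ℝ)⌋ + 2 * (D : ℤ) + 8)} with hS
  -- membership of 3D + 71
  have hmem : (3 * D + 71) ∈ S := by
    refine ⟨by omega, ?_⟩
    have hpos : (0 : ℝ) < ((3 * D + 71 : ℕ) : ℝ) := by positivity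
    have hkey : ((3 * D + 71 : ℕ) : ℝ) ^ 2 < c ^ (D + 63) := by
      have := pow_growth (D - 1)
      have hD1 : 3 * (D - 1) + 74 = 3 * D + 71 := by omega
      have hD2 : (D - 1) + 64 = D + 63 := by omega
      rwa [hD1, hD2] at this
    have hlogpow : Real.logb c (c ^ (D + 63)) = ((D + 63 : ℕ) : ℝ) := by
      rw [← Real.rpow_natCast c (D + 63), Real.logb_rpow (by linarith) (by linarith)]
    have hlt : 2 * Real.logb c (3 * (D : ℝ) + 71) < ((D : ℝ) + 63) := by
      have h1 : Real.logb c (((3 * D + 71 : ℕ) : ℝ) ^ 2) <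
          Real.logb c (c ^ (D + 63)) :=
        Real.logb_lt_logb hc1 (by positivity) hkey
      rw [Real.logb_pow, hlogpow] at h1
      push_cast at h1
      convert h1 using 2 <;> push_cast <;> ring
    have hfloor : ⌊2 * Real.logb c ((3 * D + 71 : ℕ) : ℝ)⌋ ≤ (D : ℤ) + 62 := by
      have := Int.floor_lt.mpr (by push_cast; linarith : 2 * Real.logb c ((3 * D + 71 : ℕ) : ℝ)
        < (((D : ℤ) + 63 : ℤ) : ℝ))
      omega
    push_cast
    push_cast at hfloor
    omega
  -- lower bound: elements of S are ≥ 2D + 67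
  have hlow : ∀ t ∈ S, 2 * D + 67 ≤ t := by
    intro t ht
    obtain ⟨htpos, hineq⟩ := ht
    by_contra hcon
    push_neg at hcon
    -- so t ≤ 2D + 66
    have ht66 : t ≤ 2 * D + 66 := by omega
    -- from membership: 2 logb c t < t - 2D - 8
    have hfl : ⌊2 * Real.logb c (t : ℝ)⌋ ≤ (t : ℤ) - 2 * (D : ℤ) - 9 := by omega
    have hx : 2 * Real.logb c (t : ℝ) < (t : ℝ) - 2 * D - 8 := by
      have h1 := Int.lt_floor_add_one (2 * Real.logb c (t : ℝ))
      have h2 : ((⌊2 * Real.logb c (t : ℝ)⌋ : ℝ)) ≤ ((t : ℤ) : ℝ) - 2 * (D : ℤ) - 9 := by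
        exact_mod_cast Int.cast_le.mpr hfl
      push_cast at h2
      linarith
    -- but in fact t - 2D - 8 ≤ 2 logb c t for t ≤ 2D + 66
    have hgoal : (t : ℝ) - 2 * D - 8 ≤ 2 * Real.logb c (t : ℝ) := by
      rcases le_or_gt t (2 * D + 8) with hsmall | hbig
      · have h0 : (0 : ℝ) ≤ Real.logb c (t : ℝ) :=
          Real.logb_nonneg hc1 (by exact_mod_cast htpos)
        have : (t : ℝ) ≤ 2 * D + 8 := by exact_mod_cast hsmall
        linarith
      · set s : ℝ := (t : ℝ) - 2 * D - 8 with hsdef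
        have hs1 : (1 : ℝ) ≤ s := by
          have : (2 * D + 9 : ℝ) ≤ (t : ℝ) := by exact_mod_cast hbig
          simp only [hsdef]; linarith
        have hs58 : s ≤ 58 := by
          have : (t : ℝ) ≤ 2 * D + 66 := by exact_mod_cast ht66
          simp only [hsdef]; linarith
        have hDge : (1 : ℝ) ≤ (D : ℝ) := by exact_mod_cast hD
        have hts : s + 10 ≤ (t : ℝ) := by simp only [hsdef]; linarith
        -- concavity of log between 10 and 68
        have hb0 : (0 : ℝ) ≤ s / 58 := by linarith
        have ha0 : (0 : ℝ) ≤ 1 - s / 58 := by linarith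
        have hab : (1 - s / 58) + s / 58 = 1 := by ring
        have hconc := strictConcaveOn_log_Ioi.concaveOn.2 (Set.mem_Ioi.mpr (by norm_num : (0:ℝ) < 10))
          (Set.mem_Ioi.mpr (by norm_num : (0:ℝ) < 68)) ha0 hb0 hab
        simp only [smul_eq_mul] at hconc
        have hcomb : (1 - s / 58) * 10 + s / 58 * 68 = s + 10 := by ring
        rw [hcomb] at hconc
        -- 58 log c ≤ 2 log 68
        have hlog68 : 58 * Real.log c ≤ 2 * Real.log 68 := by
          have h1 : Real.log (c ^ 29) ≤ Real.log 68 :=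
            Real.log_le_log (by positivity) c_pow29
          rw [Real.log_pow] at h1
          push_cast at h1
          linarith
        have hlog10 : (0 : ℝ) ≤ Real.log 10 := Real.log_nonneg (by norm_num)
        -- s * log c ≤ 2 * log (s + 10)
        have hkey : s * Real.log c ≤ 2 * Real.log (s + 10) := by
          have h1 : s * Real.log c = (s / 58) * (58 * Real.log c) := by ring
          have h2 : (s / 58) * (58 * Real.log c) ≤ (s / 58) * (2 * Real.log 68) :=
            mul_le_mul_of_nonneg_left hlog68 hb0
          nlinarith
        have hmono : Real.log (s + 10) ≤ Real.log (t : ℝ) :=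
          Real.log_le_log (by linarith) hts
        have hfin : s * Real.log c ≤ 2 * Real.log (t : ℝ) := by linarith
        rw [Real.logb,
          show 2 * (Real.log (t : ℝ) / Real.log c) = (2 * Real.log (t : ℝ)) / Real.log c by ring,
          le_div_iff₀ hlogc]
        linarith
    linarith
  refine ⟨sInf S, ⟨Nat.sInf_mem ⟨_, hmem⟩, fun t ht => Nat.sInf_le ht⟩, ?_, Nat.sInf_le hmem⟩
  exact hlow _ (Nat.sInf_mem ⟨_, hmem⟩)
end
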